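/- arXiv:0903.0339 — 8 statements merged into one kernel-verified Lean document; each statement's English description precedes it below -/
import Mathlib

section
/- For any finite simple graph G = (V, E), the all-ones vector over F_2 lies in the image of the matrix A + I, where A is the adjacency matrix of G over F_2 and I is the identity. Equivalently, in the sigma-plus game (pushing a vertex toggles its own state and that of all its neighbors), the all-on configuration can be reached from the all-off configuration. -/
/-!
Write `M = A + I` over `𝔽₂`. Since `M` is symmetric, its image is the orthogonal complement of its
kernel, so it suffices that `∑ i, y i = 0` whenever `M y = 0`. For such `y`,
`0 = y ⬝ M y = y ⬝ A y + ∑ i, y i ^ 2`, and `y ⬝ A y = ∑ i j, A i j y i y j` vanishes in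
characteristic two because the terms for `(i, j)` and `(j, i)` cancel and the diagonal of `A` is
zero; finally `y i ^ 2 = y i` in `𝔽₂`.
-/

open Matrix

namespace Matrix

theorem mem_range_mulVecLin_iff {K m n : Type*} [Field K] [Fintype m] [Fintype n]
    (M : Matrix m n K) (v : m → K) :
    v ∈ LinearMap.range M.mulVecLin ↔ ∀ y, y ᵥ* M = 0 → y ⬝ᵥ v = 0 := by
  classical
  constructor
  · rintro ⟨x, rfl⟩ y hy
    rw [mulVecLin_apply, dotProduct_mulVec, hy, zero_dotProduct]
  · intro h
    rw [← Subspace.forall_mem_dualAnnihilator_apply_eq_zero_iff]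
    intro φ hφ
    obtain ⟨y, rfl⟩ := (dotProductEquiv K m).surjective φ
    refine h y (dotProduct_eq_zero _ fun x => ?_)
    rw [← dotProduct_mulVec]
    exact (Submodule.mem_dualAnnihilator _).mp hφ _ ⟨x, rfl⟩

theorem IsSymm.mem_range_mulVecLin_iff {K n : Type*} [Field K] [Fintype n]
    {M : Matrix n n K} (hM : M.IsSymm) (v : n → K) :
    v ∈ LinearMap.range M.mulVecLin ↔ ∀ y, M *ᵥ y = 0 → y ⬝ᵥ v = 0 := by
  conv_rhs => rw [← hM.eq]; simp only [← vecMul_transpose, transpose_transpose]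
  exact M.mem_range_mulVecLin_iff v

theorem IsSymm.dotProduct_mulVec_self_eq_zero {R n : Type*} [CommSemiring R] [CharP R 2]
    [Fintype n] {A : Matrix n n R} (hA : A.IsSymm) (hdiag : ∀ i, A i i = 0) (y : n → R) :
    y ⬝ᵥ A *ᵥ y = 0 := by
  have hsum : y ⬝ᵥ A *ᵥ y = ∑ p : n × n, y p.1 * A p.1 p.2 * y p.2 := by
    simp only [dotProduct, mulVec, Finset.mul_sum, Fintype.sum_prod_type, mul_assoc]
  rw [hsum]
  refine Finset.sum_ninvolution Prod.swap (fun ⟨i, j⟩ => ?_) (fun ⟨i, j⟩ hne hij => ?_)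
    (by simp) Prod.swap_swap
  · change y i * A i j * y j + y j * A j i * y i = 0
    rw [hA.apply i j, show y j * A i j * y i = y i * A i j * y j by ring]
    exact CharTwo.add_self_eq_zero (R := R) _
  · obtain rfl : i = j := (Prod.ext_iff.mp hij).1.symm
    simp [hdiag] at hne

end Matrix

theorem SimpleGraph.sum_eq_zero_of_adjMatrix_add_one_mulVec_eq_zero {V : Type*} [Fintype V]
    [DecidableEq V] (G : SimpleGraph V) [DecidableRel G.Adj] {y : V → ZMod 2}
    (hy : (G.adjMatrix (ZMod 2) + 1) *ᵥ y = 0) : ∑ i, y i = 0 := by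
  have hquad : y ⬝ᵥ G.adjMatrix (ZMod 2) *ᵥ y = 0 :=
    G.isSymm_adjMatrix.dotProduct_mulVec_self_eq_zero (fun i => by simp) y
  calc ∑ i, y i = ∑ i, y i * y i := by simp only [← sq, ZMod.pow_card]
    _ = y ⬝ᵥ (G.adjMatrix (ZMod 2) + 1) *ᵥ y := by
      rw [add_mulVec, dotProduct_add, hquad, one_mulVec, zero_add, dotProduct]
    _ = 0 := by rw [hy, dotProduct_zero]

/-- Sutner's theorem: for the sigma-plus game on any finite simple graph,
the all-on configuration is reachable from the all-off configuration,
i.e. the all-ones vector over `F_2` lies in the image of `A + I`. -/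
theorem stmt_0 (V : Type*) [Fintype V] [DecidableEq V] (G : SimpleGraph V)
    [DecidableRel G.Adj] :
    ∃ x : V → ZMod 2, (G.adjMatrix (ZMod 2) + 1).mulVec x = fun _ => 1 := by
  have hsymm : (G.adjMatrix (ZMod 2) + 1).IsSymm := G.isSymm_adjMatrix.add isSymm_one
  obtain ⟨x, hx⟩ := (hsymm.mem_range_mulVecLin_iff fun _ => 1).mpr fun y hy => by
    simpa [dotProduct] using G.sum_eq_zero_of_adjMatrix_add_one_mulVec_eq_zero hy
  exact ⟨x, hx⟩
end

section
/- Let k be a field, p, q, r, s nonnegative integers, A = k[X]/(X^p), B = k[Y]/(Y^q), and let x, y denote the images of X, Y in A tensor_k B. Set u = x - y. Then x^r * y^s is divisible by u in A tensor_k B if and only if r + s >= min(p, q). -/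
open TensorProduct Polynomial

/-! Modulo `x - y` the monomial `x^r y^s` is congruent to both `x^(r+s)` and `y^(r+s)`, so it is
divisible by `x - y` as soon as `x^p = 0` with `p ≤ r + s`, or `y^q = 0` with `q ≤ r + s`.
Conversely, the algebra map `A ⊗ B → k[X]/(X^m)`, `m = min p q`, induced by the two truncations
sends `x` and `y` to the same element `X`; it kills `x - y`, hence `X^(r+s)`, forcing `m ≤ r + s`. -/

section SubDvd

variable {R : Type*} [CommRing R] (x y : R) (r s : ℕ)

theorem sub_dvd_pow_mul_pow_sub_pow_add_left : x - y ∣ x ^ r * y ^ s - x ^ (r + s) := by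
  rw [pow_add, ← mul_sub]
  exact (dvd_sub_comm.mp (sub_dvd_pow_sub_pow x y s)).mul_left _

theorem sub_dvd_pow_mul_pow_sub_pow_add_right : x - y ∣ x ^ r * y ^ s - y ^ (r + s) := by
  rw [pow_add, ← sub_mul]
  exact (sub_dvd_pow_sub_pow x y r).mul_right _

variable {x y r s}

theorem sub_dvd_pow_mul_pow_of_pow_eq_zero_left {n : ℕ} (hn : n ≤ r + s) (hx : x ^ n = 0) :
    x - y ∣ x ^ r * y ^ s := by
  simpa [pow_eq_zero_of_le hn hx] using sub_dvd_pow_mul_pow_sub_pow_add_left x y r s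

theorem sub_dvd_pow_mul_pow_of_pow_eq_zero_right {n : ℕ} (hn : n ≤ r + s) (hy : y ^ n = 0) :
    x - y ∣ x ^ r * y ^ s := by
  simpa [pow_eq_zero_of_le hn hy] using sub_dvd_pow_mul_pow_sub_pow_add_right x y r s

theorem pow_add_eq_zero_of_sub_dvd {S F : Type*} [CommRing S] [FunLike F R S] [RingHomClass F R S]
    (f : F) (h : x - y ∣ x ^ r * y ^ s) (hxy : f x = f y) : f x ^ (r + s) = 0 := by
  have := map_dvd f h
  rwa [map_sub, map_mul, map_pow, map_pow, ← hxy, sub_self, zero_dvd_iff, ← pow_add] at this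

end SubDvd

namespace Polynomial

theorem X_pow_dvd_X_pow_iff {k : Type*} [CommRing k] [Nontrivial k] {m n : ℕ} :
    (X : k[X]) ^ m ∣ X ^ n ↔ m ≤ n := by
  refine ⟨fun h => ?_, pow_dvd_pow X⟩
  by_contra! hnm
  simpa using X_pow_dvd_iff.mp h n hnm

theorem mk_X_pow_eq_zero_iff {k : Type*} [CommRing k] [Nontrivial k] {m n : ℕ} :
    Ideal.Quotient.mk (Ideal.span {(X : k[X]) ^ m}) X ^ n = 0 ↔ m ≤ n := by
  rw [← map_pow, Ideal.Quotient.eq_zero_iff_mem, Ideal.mem_span_singleton, X_pow_dvd_X_pow_iff]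

end Polynomial

/-- In `k[X]/(X^p) ⊗ k[Y]/(Y^q)`, the element `x^r y^s` is divisible by `x - y`
iff `r + s ≥ min(p, q)`. -/
theorem stmt_3 (k : Type*) [Field k] (p q r s : ℕ) :
    let A := Polynomial k ⧸ Ideal.span {(X : Polynomial k) ^ p}
    let B := Polynomial k ⧸ Ideal.span {(X : Polynomial k) ^ q}
    let x : A ⊗[k] B := (Ideal.Quotient.mk _ X) ⊗ₜ 1
    let y : A ⊗[k] B := 1 ⊗ₜ (Ideal.Quotient.mk _ X)
    ((x - y) ∣ x ^ r * y ^ s) ↔ min p q ≤ r + s := by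
  intro A B x y
  constructor
  · intro h
    have truncate {n : ℕ} (hn : min p q ≤ n) :
        Ideal.span {(X : k[X]) ^ n} ≤ Ideal.span {(X : k[X]) ^ min p q} :=
      Ideal.span_singleton_le_span_singleton.mpr (pow_dvd_pow X hn)
    let φ : A ⊗[k] B →ₐ[k] k[X] ⧸ Ideal.span {(X : k[X]) ^ min p q} :=
      Algebra.TensorProduct.lift (Ideal.Quotient.factorₐ k (truncate (min_le_left p q)))
        (Ideal.Quotient.factorₐ k (truncate (min_le_right p q))) fun _ _ => .all _ _
    have hφx : φ x = Ideal.Quotient.mk _ X := by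
      rw [Algebra.TensorProduct.lift_tmul, map_one, mul_one, Ideal.Quotient.factorₐ_apply_mk]
    have hφy : φ y = Ideal.Quotient.mk _ X := by
      rw [Algebra.TensorProduct.lift_tmul, map_one, one_mul, Ideal.Quotient.factorₐ_apply_mk]
    refine (mk_X_pow_eq_zero_iff (k := k)).mp ?_
    rw [← hφx]
    exact pow_add_eq_zero_of_sub_dvd φ h (hφx.trans hφy.symm)
  · intro h
    rcases min_le_iff.mp h with hp | hq
    · refine sub_dvd_pow_mul_pow_of_pow_eq_zero_left (x := x) (y := y) hp ?_
      rw [Algebra.TensorProduct.tmul_pow, mk_X_pow_eq_zero_iff.mpr le_rfl, zero_tmul]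
    · refine sub_dvd_pow_mul_pow_of_pow_eq_zero_right (x := x) (y := y) hq ?_
      rw [Algebra.TensorProduct.tmul_pow, mk_X_pow_eq_zero_iff.mpr le_rfl, tmul_zero]
end

section
/- Let n be an odd positive integer and write n + 1 = 2^j * m with m odd. Then in F_2[X], the X-adic valuation of Q_n equals 2^j - 1, i.e., X^{2^j - 1} divides Q_n but X^{2^j} does not. -/
open Polynomial

theorem stmt12_aux (Q : ℕ → Polynomial (ZMod 2)) (h0 : Q 0 = 1) (h1 : Q 1 = Polynomial.X)
    (hrec : ∀ i, Q (i + 2) = Polynomial.X * Q (i + 1) + Q i) :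
    ∀ k, Q (2*k+1) = X * Q k ^ 2 ∧ Q (2*k+2) = Q (k+1)^2 + Q k ^ 2 := by
  have addself : ∀ p : Polynomial (ZMod 2), p + p = 0 := fun p => CharTwo.add_self_eq_zero p
  have addsq : ∀ a b : Polynomial (ZMod 2), (a + b)^2 = a^2 + b^2 := fun a b => CharTwo.add_sq a b
  intro k
  induction k with
  | zero =>
    constructor
    · simpa [h0] using h1
    · rw [hrec 0, h0, h1]; ring_nf
  | succ k ih =>
    obtain ⟨ih1, ih2⟩ := ih
    have e1 : Q (2*(k+1)+1) = X * Q (k+1) ^ 2 := by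
      have := hrec (2*k+1)
      have hidx : 2*k+1+2 = 2*(k+1)+1 := by ring
      rw [hidx] at this
      rw [this]
      have hidx2 : 2*k+1+1 = 2*k+2 := by ring
      rw [hidx2, ih2, ih1]
      rw [mul_add, add_assoc, addself, add_zero]
    refine ⟨e1, ?_⟩
    have := hrec (2*k+2)
    have hidx : 2*k+2+2 = 2*(k+1)+2 := by ring
    rw [hidx] at this
    rw [this]
    have hidx2 : 2*k+2+1 = 2*(k+1)+1 := by ring
    rw [hidx2, e1, ih2]
    have : Q (k+1+1) = X * Q (k+1) + Q k := hrec k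
    rw [this, addsq]
    ring

theorem stmt12_eval (Q : ℕ → Polynomial (ZMod 2)) (h0 : Q 0 = 1)
    (hrec : ∀ i, Q (i + 2) = Polynomial.X * Q (i + 1) + Q i) :
    ∀ k, (Q (2*k)).eval 0 = 1 := by
  intro k
  induction k with
  | zero => simp [h0]
  | succ k ih =>
    have := hrec (2*k)
    have hidx : 2*k+2 = 2*(k+1) := by ring
    rw [hidx] at this
    rw [this]
    simp [ih]

theorem stmt12_main (Q : ℕ → Polynomial (ZMod 2)) (h0 : Q 0 = 1) (h1 : Q 1 = Polynomial.X)
    (hrec : ∀ i, Q (i + 2) = Polynomial.X * Q (i + 1) + Q i) :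
    ∀ j m n, Odd m → Odd n → n + 1 = 2 ^ j * m →
      ∃ u, Q n = X ^ (2^j - 1) * u ∧ u.eval 0 = 1 := by
  intro j
  induction j with
  | zero =>
    intro m n hm hn hnm
    exfalso
    simp only [pow_zero, one_mul] at hnm
    rcases hm with ⟨a, ha⟩
    rcases hn with ⟨b, hb⟩
    omega
  | succ j ih =>
    intro m n hm hn hnm
    obtain ⟨k, hk⟩ := hn
    have hpow : (2:ℕ)^(j+1) = 2 * 2^j := by rw [pow_succ]; ring
    rw [hpow] at hnm
    have hnm' : n + 1 = 2 * (2^j * m) := by rw [hnm]; ring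
    have hk1 : k + 1 = 2^j * m := by omega
    have hQn : Q n = X * Q k ^ 2 := by
      rw [hk]; exact (stmt12_aux Q h0 h1 hrec k).1
    rcases Nat.even_or_odd k with hke | hko
    · -- j must be 0
      have hj0 : j = 0 := by
        by_contra hj
        have h2 : 2 ∣ 2^j := dvd_pow_self 2 hj
        rcases hke with ⟨t, ht⟩
        rcases hm with ⟨a, ha⟩
        rcases h2 with ⟨c, hc⟩
        have hdvd : 2 ∣ k + 1 := by
          rw [hk1, hc]; exact Dvd.intro (c * m) (by ring)
        omega
      subst hj0
      obtain ⟨t, ht⟩ := hke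
      refine ⟨Q k ^ 2, ?_, ?_⟩
      · rw [hQn]; norm_num
      · have : k = 2 * t := by omega
        rw [this]
        simp [stmt12_eval Q h0 hrec t]
    · obtain ⟨u, hu, hu0⟩ := ih m k hm hko hk1
      refine ⟨u ^ 2, ?_, ?_⟩
      · rw [hQn, hu, mul_pow, ← pow_mul]
        have h1le : 1 ≤ (2:ℕ)^j := Nat.one_le_two_pow
        have hexp : (2^j - 1) * 2 + 1 = 2^(j+1) - 1 := by rw [pow_succ]; omega
        have hring : Polynomial.X * (Polynomial.X ^ ((2^j-1)*2) * u^2)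
            = Polynomial.X ^ ((2^j-1)*2 + 1) * u^2 := by ring
        rw [hring, hexp]
      · simp [hu0]

/-- For odd positive `n` with `n + 1 = 2^j * m`, `m` odd, the `X`-adic valuation of
the mod-2 Chebyshev polynomial `Q_n` equals `2^j - 1`. -/
theorem stmt_12 (Q : ℕ → Polynomial (ZMod 2)) (h0 : Q 0 = 1) (h1 : Q 1 = Polynomial.X)
    (hrec : ∀ i, Q (i + 2) = Polynomial.X * Q (i + 1) + Q i)
    (n j m : ℕ) (hpos : 0 < n) (hn : Odd n) (hm : Odd m) (hnm : n + 1 = 2 ^ j * m) :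
    Polynomial.X ^ (2 ^ j - 1) ∣ Q n ∧ ¬ Polynomial.X ^ (2 ^ j) ∣ Q n := by
  obtain ⟨u, hu, hu0⟩ := stmt12_main Q h0 h1 hrec j m n hm hn hnm
  constructor
  · exact ⟨u, hu⟩
  · rintro ⟨v, hv⟩
    have h1le : 1 ≤ (2:ℕ)^j := Nat.one_le_two_pow
    have hsplit : (2:ℕ)^j = (2^j - 1) + 1 := by omega
    rw [hu, hsplit, pow_succ, mul_assoc] at hv
    have hXne : (X : Polynomial (ZMod 2)) ^ (2^j - 1) ≠ 0 := pow_ne_zero _ X_ne_zero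
    have hcancel : u = X * v := mul_left_cancel₀ hXne hv
    rw [hcancel] at hu0
    simp at hu0
end

section
/- The characteristic polynomial of the n x n matrix J_n over F_2 (with 1's directly above and below the diagonal and 0's elsewhere) is the mod-2 Chebyshev polynomial Q_n, and moreover the minimal polynomial of J_n equals its characteristic polynomial; equivalently, the map k[X]/(Q_n) -> k^n sending X^i to J_n^i(e_1) is an isomorphism of k-vector spaces for any field k of characteristic 2. -/
/-!
Over characteristic 2 the recurrence `Q (i + 2) = X * Q (i + 1) + Q i` matches the action of `J`
on the standard basis, `J e_{i+1} = e_i + e_{i+2}`, so `Q i (J) e_0 = e_i` for `i < n` and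
`Q n (J) e_0 = 0`. Hence `e_0` is a cyclic vector: `p ↦ p(J) e_0` maps the `n`-dimensional space
of polynomials of degree `< n` onto `kⁿ`, so no nonzero polynomial of degree `< n` annihilates `J`
and the minimal polynomial has degree `n`, forcing it to equal the characteristic polynomial.
Since `Q n` is monic of degree `n` and kills every `e_j = Q j (J) e_0`, it is that polynomial too.
-/

open Polynomial Matrix

theorem monic_and_natDegree_of_recurrence {R : Type*} [CommSemiring R] [Nontrivial R]
    {Q : ℕ → R[X]} (h0 : Q 0 = 1) (h1 : Q 1 = X)
    (hrec : ∀ i, Q (i + 2) = X * Q (i + 1) + Q i) :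
    ∀ i, (Q i).Monic ∧ (Q i).natDegree = i
  | 0 => by simp [h0]
  | 1 => by simp [h1]
  | i + 2 => by
    have hdeg := (monic_and_natDegree_of_recurrence h0 h1 hrec i).2
    obtain ⟨hmon₁, hdeg₁⟩ := monic_and_natDegree_of_recurrence h0 h1 hrec (i + 1)
    have hXmon : (X * Q (i + 1)).Monic := monic_X.mul hmon₁
    have hXdeg : (X * Q (i + 1)).natDegree = i + 2 := by
      rw [natDegree_X_mul hmon₁.ne_zero, hdeg₁]
    have hlt : (Q i).degree < (X * Q (i + 1)).degree := degree_lt_degree (by omega)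
    rw [hrec]
    exact ⟨hXmon.add_of_left hlt, by rw [natDegree_add_eq_left_of_degree_lt hlt, hXdeg]⟩

/-- The standard basis vector `e_i` of `Fin n → R`, extended by `e_i = 0` for `i ≥ n` so that
`J e_{i+1} = e_i + e_{i+2}` also holds at the last index. -/
def stdVec (R : Type*) [Zero R] [One R] (n i : ℕ) : Fin n → R :=
  fun r => if (r : ℕ) = i then 1 else 0

theorem stdVec_of_lt {R : Type*} [Zero R] [One R] {n i : ℕ} (h : i < n) :
    stdVec R n i = Pi.single ⟨i, h⟩ 1 := by
  funext r
  simp [stdVec, Pi.single_apply, Fin.ext_iff]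

theorem stdVec_self (R : Type*) [Zero R] [One R] (n : ℕ) : stdVec R n n = 0 := by
  funext r
  simp [stdVec, r.2.ne]

theorem mulVec_stdVec_apply {R : Type*} [NonAssocSemiring R] {n i : ℕ}
    (A : Matrix (Fin n) (Fin n) R) (h : i < n) (r : Fin n) :
    (A *ᵥ stdVec R n i) r = A r ⟨i, h⟩ := by
  rw [stdVec_of_lt h, mulVec_single_one, col_apply]

section Tridiagonal

variable {R : Type*} [CommSemiring R] {n : ℕ} {J : Matrix (Fin n) (Fin n) R}

theorem tridiagonal_mulVec_stdVec_zero
    (hJ : ∀ i j : Fin n, J i j = if (i : ℕ) + 1 = j ∨ (j : ℕ) + 1 = i then 1 else 0) :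
    J *ᵥ stdVec R n 0 = stdVec R n 1 := by
  funext r
  rcases Nat.eq_zero_or_pos n with rfl | hn
  · exact r.elim0
  rw [mulVec_stdVec_apply J hn, hJ]
  simp only [stdVec]
  split_ifs <;> simp_all

theorem tridiagonal_mulVec_stdVec_succ
    (hJ : ∀ i j : Fin n, J i j = if (i : ℕ) + 1 = j ∨ (j : ℕ) + 1 = i then 1 else 0)
    {i : ℕ} (hi : i + 1 < n) :
    J *ᵥ stdVec R n (i + 1) = stdVec R n i + stdVec R n (i + 2) := by
  funext r
  rw [mulVec_stdVec_apply J hi, hJ, Pi.add_apply]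
  simp only [stdVec]
  split_ifs <;> first | omega | simp

theorem aeval_mulVec_stdVec_zero [CharP R 2] {Q : ℕ → R[X]} (h0 : Q 0 = 1) (h1 : Q 1 = X)
    (hrec : ∀ i, Q (i + 2) = X * Q (i + 1) + Q i)
    (hJ : ∀ i j : Fin n, J i j = if (i : ℕ) + 1 = j ∨ (j : ℕ) + 1 = i then 1 else 0) :
    ∀ i ≤ n, aeval J (Q i) *ᵥ stdVec R n 0 = stdVec R n i
  | 0, _ => by simp [h0]
  | 1, _ => by simpa [h1] using tridiagonal_mulVec_stdVec_zero hJ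
  | i + 2, hi => by
    rw [hrec, map_add, map_mul, aeval_X, add_mulVec, ← mulVec_mulVec,
      aeval_mulVec_stdVec_zero h0 h1 hrec hJ (i + 1) (by omega),
      aeval_mulVec_stdVec_zero h0 h1 hrec hJ i (by omega),
      tridiagonal_mulVec_stdVec_succ hJ (by omega), add_right_comm, ← two_smul R,
      CharTwo.two_eq_zero, zero_smul, zero_add]

theorem aeval_eq_zero_of_recurrence [CharP R 2] {Q : ℕ → R[X]} (h0 : Q 0 = 1) (h1 : Q 1 = X)
    (hrec : ∀ i, Q (i + 2) = X * Q (i + 1) + Q i)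
    (hJ : ∀ i j : Fin n, J i j = if (i : ℕ) + 1 = j ∨ (j : ℕ) + 1 = i then 1 else 0) :
    aeval J (Q n) = 0 := by
  have hcyc := aeval_mulVec_stdVec_zero h0 h1 hrec hJ
  refine ext_of_mulVec_single fun j => ?_
  rw [show Pi.single j (1 : R) = stdVec R n j from (stdVec_of_lt j.2).symm, ← hcyc j j.2.le,
    mulVec_mulVec, ← map_mul, mul_comm, map_mul, ← mulVec_mulVec, hcyc n le_rfl, stdVec_self,
    mulVec_zero, zero_mulVec]

theorem exists_mem_degreeLT_aeval_mulVec_stdVec_zero_eq [CharP R 2] [Nontrivial R]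
    {Q : ℕ → R[X]} (h0 : Q 0 = 1) (h1 : Q 1 = X) (hrec : ∀ i, Q (i + 2) = X * Q (i + 1) + Q i)
    (hJ : ∀ i j : Fin n, J i j = if (i : ℕ) + 1 = j ∨ (j : ℕ) + 1 = i then 1 else 0)
    (w : Fin n → R) : ∃ p ∈ R[X]_n, aeval J p *ᵥ stdVec R n 0 = w := by
  have hQ := monic_and_natDegree_of_recurrence h0 h1 hrec
  refine ⟨∑ i : Fin n, w i • Q i, ?_, ?_⟩
  · refine Submodule.sum_mem _ fun i _ => Submodule.smul_mem _ _ (mem_degreeLT.2 ?_)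
    rw [degree_eq_natDegree (hQ i).1.ne_zero, (hQ i).2]
    exact_mod_cast i.2
  · simp only [map_sum, map_smul, sum_mulVec, smul_mulVec,
      fun i : Fin n => aeval_mulVec_stdVec_zero h0 h1 hrec hJ i i.2.le]
    funext r
    simp [stdVec, Finset.sum_apply, Fin.val_inj]

end Tridiagonal

theorem minpoly_eq_charpoly_of_surjective {K ι : Type*} [Field K] [Fintype ι] [DecidableEq ι]
    (A : Matrix ι ι K) (v : ι → K)
    (hv : ∀ w, ∃ p ∈ K[X]_(Fintype.card ι), aeval A p *ᵥ v = w) :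
    minpoly K A = A.charpoly := by
  let f : K[X]_(Fintype.card ι) →ₗ[K] ι → K :=
    LinearMap.applyₗ v ∘ₗ toLin'.toLinearMap ∘ₗ (aeval A).toLinearMap ∘ₗ Submodule.subtype _
  have hsurj : Function.Surjective f := fun w => by
    obtain ⟨p, hp, rfl⟩ := hv w
    exact ⟨⟨p, hp⟩, by simp [f]⟩
  have hinj : Function.Injective f :=
    (LinearMap.injective_iff_surjective_of_finrank_eq_finrank
      (by simp [(degreeLTEquiv K _).finrank_eq])).2 hsurj
  have hdeg : Fintype.card ι ≤ (minpoly K A).natDegree := by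
    by_contra! hlt
    have hmem : minpoly K A ∈ K[X]_(Fintype.card ι) :=
      mem_degreeLT.2 ((degree_le_natDegree).trans_lt (by exact_mod_cast hlt))
    have hzero : (⟨minpoly K A, hmem⟩ : K[X]_(Fintype.card ι)) = 0 :=
      hinj (by simp [f, minpoly.aeval])
    exact minpoly.ne_zero A.isIntegral (congrArg Subtype.val hzero)
  exact (eq_of_monic_of_dvd_of_natDegree_le (minpoly.monic A.isIntegral) A.charpoly_monic
    A.minpoly_dvd_charpoly (by rwa [charpoly_natDegree_eq_dim])).symm

/-- Over a field of characteristic 2, the characteristic polynomial of the tridiagonal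
matrix `J_n` is the mod-2 Chebyshev polynomial `Q_n`, and the minimal polynomial of `J_n`
equals its characteristic polynomial. -/
theorem stmt_13 (k : Type*) [Field k] [CharP k 2] (Q : ℕ → Polynomial k)
    (h0 : Q 0 = 1) (h1 : Q 1 = Polynomial.X)
    (hrec : ∀ i, Q (i + 2) = Polynomial.X * Q (i + 1) + Q i)
    (n : ℕ) (J : Matrix (Fin n) (Fin n) k)
    (hJ : ∀ i j : Fin n, J i j = if (i : ℕ) + 1 = j ∨ (j : ℕ) + 1 = i then 1 else 0) :
    J.charpoly = Q n ∧ minpoly k J = J.charpoly := by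
  have hmin : minpoly k J = J.charpoly :=
    minpoly_eq_charpoly_of_surjective J (stdVec k n 0) (by
      simpa using exists_mem_degreeLT_aeval_mulVec_stdVec_zero_eq h0 h1 hrec hJ)
  obtain ⟨hmonic, hdeg⟩ := monic_and_natDegree_of_recurrence h0 h1 hrec n
  have hQn : Q n = minpoly k J :=
    eq_of_monic_of_dvd_of_natDegree_le (minpoly.monic J.isIntegral) hmonic
      (minpoly.dvd k J (aeval_eq_zero_of_recurrence h0 h1 hrec hJ))
      (by rw [hdeg, hmin, charpoly_natDegree_eq_dim, Fintype.card_fin])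
  exact ⟨by rw [← hmin, hQn], hmin⟩
end

section
/- Let n >= 1 and let i satisfy 0 <= i <= floor(n/2). In F_2[X]/(Q_n(X)), the element Q_{n-1-i}(x) + Q_i(x) is divisible by c_n, where c_n = Q_{(n-1)/2}(x) if n is odd and c_n = Q_{n/2}(x) + Q_{n/2 - 1}(x) if n is even. Consequently, every doubly symmetric configuration in F_2[X]/(Q_n) tensor F_2[Y]/(Q_m) is divisible by the central configuration c_n * d_m. -/
/-!
In characteristic two the recurrence `Q_{i+2} = X Q_{i+1} + Q_i` can be run backwards with the
same coefficients, so for fixed `a`, `b` the reflected sums `Q_{a+j} + Q_{b-j}` satisfy it as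
well, as functions of `j`. Starting from the centre of `0, …, n-1`, the first two of these sums
are `0` and `x c_n` (`n` odd), or `c_n` and `(x + 1) c_n` (`n` even), hence all of them are
multiples of `c_n`. A doubly symmetric configuration is a sum of tensor products of such
symmetric pairs and of central terms, each divisible by `c_n ⊗ d_m`.
-/

open TensorProduct Polynomial

section Recurrence

variable {R : Type*}

theorem dvd_of_two_step_recurrence [CommSemiring R] {v : ℕ → R} {t C : R} {N : ℕ}
    (hrec : ∀ j, j + 2 ≤ N → v (j + 2) = t * v (j + 1) + v j)
    (h0 : C ∣ v 0) (h1 : 1 ≤ N → C ∣ v 1) : ∀ j ≤ N, C ∣ v j := by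
  intro j
  induction j using Nat.twoStepInduction with
  | zero => exact fun _ => h0
  | one => exact h1
  | more j ih₀ ih₁ =>
    intro hj
    rw [hrec j hj]
    exact ((ih₁ (by omega)).mul_left t).add (ih₀ (by omega))

variable [CommRing R] [CharP R 2] {u : ℕ → R} {t : R}

theorem add_add_two_eq_mul (hrec : ∀ i, u (i + 2) = t * u (i + 1) + u i) (k : ℕ) :
    u (k + 2) + u k = t * u (k + 1) := by
  rw [hrec, add_assoc, CharTwo.add_self_eq_zero, add_zero]

theorem add_add_three_eq_mul (hrec : ∀ i, u (i + 2) = t * u (i + 1) + u i) (k : ℕ) :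
    u (k + 3) + u k = (t + 1) * (u (k + 2) + u (k + 1)) := by
  have h₂ := hrec k
  have h₃ := hrec (k + 1)
  linear_combination h₃ - h₂ - t * u (k + 1) * CharTwo.two_eq_zero (R := R)

theorem add_sub_recurrence (hrec : ∀ i, u (i + 2) = t * u (i + 1) + u i) {a b j : ℕ}
    (hj : j + 2 ≤ b) :
    u (a + (j + 2)) + u (b - (j + 2)) =
      t * (u (a + (j + 1)) + u (b - (j + 1))) + (u (a + j) + u (b - j)) := by
  obtain ⟨k, rfl⟩ : ∃ k, b = k + (j + 2) := ⟨b - (j + 2), by omega⟩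
  have hu := hrec (a + j)
  have hv := hrec k
  rw [show a + j + 2 = a + (j + 2) by omega, show a + j + 1 = a + (j + 1) by omega] at hu
  rw [show k + (j + 2) - (j + 2) = k by omega, show k + (j + 2) - (j + 1) = k + 1 by omega,
    show k + (j + 2) - j = k + 2 by omega, hv]
  linear_combination hu - t * u (k + 1) * CharTwo.two_eq_zero (R := R)

theorem dvd_add_sub (hrec : ∀ i, u (i + 2) = t * u (i + 1) + u i) {C : R} {a b : ℕ}
    (h0 : C ∣ u a + u b) (h1 : 1 ≤ b → C ∣ u (a + 1) + u (b - 1)) :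
    ∀ j ≤ b, C ∣ u (a + j) + u (b - j) :=
  dvd_of_two_step_recurrence (v := fun j => u (a + j) + u (b - j))
    (fun _ hj => add_sub_recurrence hrec hj) (by simpa using h0) h1

end Recurrence

/-- The element `c_n` of the paper, with `u i` in place of `Q_i(x)`. -/
def centralTerm {R : Type*} [Add R] (u : ℕ → R) (n : ℕ) : R :=
  if Odd n then u ((n - 1) / 2) else u (n / 2) + u (n / 2 - 1)

section CentralTerm

variable {R : Type*}

theorem map_centralTerm {S F : Type*} [Add R] [Add S] [FunLike F R S] [AddHomClass F R S]
    (f : F) (u : ℕ → R) (n : ℕ) : f (centralTerm u n) = centralTerm (f ∘ u) n := by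
  unfold centralTerm
  split_ifs <;> simp only [Function.comp_apply, map_add]

theorem centralTerm_of_two_mul_add_one [Add R] (u : ℕ → R) {n i : ℕ} (h : 2 * i + 1 = n) :
    centralTerm u n = u i := by
  rw [centralTerm, if_pos ⟨i, by omega⟩]
  congr 1
  omega

variable [CommRing R] [CharP R 2] {u : ℕ → R} {t : R}

theorem centralTerm_dvd_add (hrec : ∀ i, u (i + 2) = t * u (i + 1) + u i) {n i : ℕ}
    (hi : i ≤ n / 2) : centralTerm u n ∣ u (n - 1 - i) + u i := by
  rcases Nat.even_or_odd' n with ⟨k, rfl | rfl⟩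
  · rw [centralTerm, if_neg (Nat.not_odd_iff_even.2 (even_two_mul k))]
    rcases (show i = k ∨ i < k by omega) with rfl | hik
    · rw [show 2 * i / 2 = i by omega, show 2 * i - 1 - i = i - 1 by omega, add_comm]
    obtain ⟨l, rfl⟩ : ∃ l, k = l + 1 := ⟨k - 1, by omega⟩
    have h1 : 1 ≤ l → u (l + 1) + u l ∣ u (l + 1 + 1) + u (l - 1) := by
      intro hl
      obtain ⟨p, rfl⟩ : ∃ p, l = p + 1 := ⟨l - 1, by omega⟩
      exact ⟨t + 1, by rw [add_tsub_cancel_right, add_add_three_eq_mul hrec, mul_comm]⟩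
    have h := dvd_add_sub hrec dvd_rfl h1 (l - i) (by omega)
    rw [show 2 * (l + 1) / 2 = l + 1 by omega, add_tsub_cancel_right]
    convert h using 3 <;> omega
  · rw [centralTerm, if_pos (odd_two_mul_add_one k), show (2 * k + 1 - 1) / 2 = k by omega]
    have h0 : u k ∣ u k + u k := by rw [CharTwo.add_self_eq_zero]; exact dvd_zero _
    have h1 : 1 ≤ k → u k ∣ u (k + 1) + u (k - 1) := by
      intro hk
      obtain ⟨p, rfl⟩ : ∃ p, k = p + 1 := ⟨k - 1, by omega⟩
      exact ⟨t, by rw [add_tsub_cancel_right, add_add_two_eq_mul hrec, mul_comm]⟩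
    have h := dvd_add_sub hrec h0 h1 (k - i) (by omega)
    convert h using 3 <;> omega

theorem centralTerm_dvd_add_rev (hrec : ∀ i, u (i + 2) = t * u (i + 1) + u i) {n : ℕ}
    (i : Fin n) : centralTerm u n ∣ u i + u i.rev := by
  rw [Fin.val_rev]
  rcases le_or_gt (i : ℕ) (n / 2) with hi | hi
  · rw [show n - (i + 1) = n - 1 - i by omega, add_comm]
    exact centralTerm_dvd_add hrec hi
  · convert centralTerm_dvd_add hrec (n := n) (i := n - 1 - i) (by omega) using 3 <;> omega

end CentralTerm

section SymmetricSums

open Finset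

theorem Fin.sum_univ_eq_sum_pairs_add_sum_center {M : Type*} [AddCommMonoid M] {n : ℕ}
    (f : Fin n → M) :
    ∑ i, f i = ∑ i ∈ univ.filter (fun i : Fin n => 2 * (i : ℕ) + 1 < n), (f i + f i.rev) +
      ∑ i ∈ univ.filter (fun i : Fin n => 2 * (i : ℕ) + 1 = n), f i := by
  have hlow := sum_filter_add_sum_filter_not univ (fun i : Fin n => 2 * (i : ℕ) + 1 < n) f
  have hhigh := sum_filter_add_sum_filter_not
    (univ.filter fun i : Fin n => ¬ 2 * (i : ℕ) + 1 < n)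
    (fun i : Fin n => 2 * (i : ℕ) + 1 = n) f
  simp only [filter_filter] at hhigh
  have hcenter : (univ.filter fun i : Fin n => ¬ 2 * (i : ℕ) + 1 < n ∧ 2 * (i : ℕ) + 1 = n) =
      univ.filter fun i : Fin n => 2 * (i : ℕ) + 1 = n := by
    ext i; simp only [mem_filter, mem_univ, true_and]; omega
  have hrev : ∑ i ∈ univ.filter
        (fun i : Fin n => ¬ 2 * (i : ℕ) + 1 < n ∧ ¬ 2 * (i : ℕ) + 1 = n), f i =
      ∑ i ∈ univ.filter (fun i : Fin n => 2 * (i : ℕ) + 1 < n), f i.rev := by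
    refine sum_nbij' Fin.rev Fin.rev ?_ ?_ (fun i _ => i.rev_rev) (fun i _ => i.rev_rev)
      (fun i _ => by rw [Fin.rev_rev])
    all_goals
      intro i hi
      simp only [mem_filter, mem_univ, true_and, not_lt, Fin.val_rev] at hi ⊢
      omega
  rw [sum_add_distrib, ← hlow, ← hhigh, hcenter, hrev]
  abel

theorem dvd_sum_of_dvd_add_rev {R : Type*} [Semiring R] {n : ℕ} {c : R} {f : Fin n → R}
    (hpair : ∀ i, c ∣ f i + f i.rev)
    (hcenter : ∀ i : Fin n, 2 * (i : ℕ) + 1 = n → c ∣ f i) :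
    c ∣ ∑ i, f i := by
  rw [Fin.sum_univ_eq_sum_pairs_add_sum_center]
  exact (Finset.dvd_sum fun i _ => hpair i).add
    (Finset.dvd_sum fun i hi => hcenter i (Finset.mem_filter.1 hi).2)

theorem dvd_sum_smul_of_rev {K A : Type*} [Semiring A] [DistribSMul K A] [SMulCommClass K A A]
    {n : ℕ} {c : A} {e : Fin n → A}
    (hpair : ∀ i, c ∣ e i + e i.rev)
    (hcenter : ∀ i : Fin n, 2 * (i : ℕ) + 1 = n → c ∣ e i)
    (a : Fin n → K) (ha : ∀ i, a i.rev = a i) : c ∣ ∑ i, a i • e i :=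
  dvd_sum_of_dvd_add_rev (fun i => by rw [ha, ← smul_add]; exact dvd_smul_of_dvd _ (hpair i))
    (fun i hi => dvd_smul_of_dvd _ (hcenter i hi))

variable {K A B : Type*} [CommSemiring K] [CommSemiring A] [Algebra K A]
  [CommSemiring B] [Algebra K B]

theorem tmul_dvd_tmul {c x : A} {d y : B} (hx : c ∣ x) (hy : d ∣ y) :
    c ⊗ₜ[K] d ∣ x ⊗ₜ[K] y := by
  obtain ⟨x, rfl⟩ := hx
  obtain ⟨y, rfl⟩ := hy
  exact ⟨x ⊗ₜ y, (Algebra.TensorProduct.tmul_mul_tmul c x d y).symm⟩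

theorem tmul_dvd_sum_sum_smul_tmul {n m : ℕ} {c : A} {d : B} {e : Fin n → A} {f : Fin m → B}
    (he : ∀ i, c ∣ e i + e i.rev)
    (he_center : ∀ i : Fin n, 2 * (i : ℕ) + 1 = n → c ∣ e i)
    (hf : ∀ j, d ∣ f j + f j.rev)
    (hf_center : ∀ j : Fin m, 2 * (j : ℕ) + 1 = m → d ∣ f j)
    (a : Fin n → Fin m → K) (ha_row : ∀ i j, a i.rev j = a i j)
    (ha_col : ∀ i j, a i j.rev = a i j) :
    c ⊗ₜ[K] d ∣ ∑ i, ∑ j, a i j • (e i ⊗ₜ[K] f j) := by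
  have hrow : ∀ i, d ∣ ∑ j, a i j • f j := fun i =>
    dvd_sum_smul_of_rev hf hf_center (a i) (ha_col i)
  simp_rw [← tmul_smul, ← tmul_sum]
  refine dvd_sum_of_dvd_add_rev (fun i => ?_) (fun i hi => tmul_dvd_tmul (he_center i hi) (hrow i))
  simp_rw [ha_row, ← add_tmul]
  exact tmul_dvd_tmul (he i) (hrow i)

end SymmetricSums

theorem stmt_15_general (Q : ℕ → Polynomial (ZMod 2))
    (hrec : ∀ i, Q (i + 2) = Polynomial.X * Q (i + 1) + Q i)
    (n m : ℕ) :
    let A := Polynomial (ZMod 2) ⧸ Ideal.span {Q n}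
    let B := Polynomial (ZMod 2) ⧸ Ideal.span {Q m}
    let mkA : Polynomial (ZMod 2) → A := Ideal.Quotient.mk _
    let mkB : Polynomial (ZMod 2) → B := Ideal.Quotient.mk _
    let c : A := if Odd n then mkA (Q ((n - 1) / 2))
      else mkA (Q (n / 2)) + mkA (Q (n / 2 - 1))
    let d : B := if Odd m then mkB (Q ((m - 1) / 2))
      else mkB (Q (m / 2)) + mkB (Q (m / 2 - 1))
    (∀ i : ℕ, i ≤ n / 2 → c ∣ mkA (Q (n - 1 - i)) + mkA (Q i)) ∧
    (∀ a : Fin n → Fin m → ZMod 2,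
      (∀ i j, a i j = a i.rev j ∧ a i j = a i j.rev) →
      (c ⊗ₜ d : A ⊗[ZMod 2] B) ∣
        ∑ i : Fin n, ∑ j : Fin m, a i j • ((mkA (Q (i : ℕ))) ⊗ₜ (mkB (Q (j : ℕ))))) := by
  intro A B mkA mkB c d
  have hc : c = mkA (centralTerm Q n) := (map_centralTerm (Ideal.Quotient.mk _) Q n).symm
  have hd : d = mkB (centralTerm Q m) := (map_centralTerm (Ideal.Quotient.mk _) Q m).symm
  have hpair (k : ℕ) (I : Ideal (ZMod 2)[X]) (i : Fin k) :
      Ideal.Quotient.mk I (centralTerm Q k) ∣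
        Ideal.Quotient.mk I (Q i) + Ideal.Quotient.mk I (Q i.rev) :=
    map_add (Ideal.Quotient.mk I) _ _ ▸ map_dvd _ (centralTerm_dvd_add_rev hrec i)
  have hcenter (k : ℕ) (I : Ideal (ZMod 2)[X]) (i : Fin k) (hi : 2 * (i : ℕ) + 1 = k) :
      Ideal.Quotient.mk I (centralTerm Q k) ∣ Ideal.Quotient.mk I (Q i) := by
    rw [centralTerm_of_two_mul_add_one Q hi]
  refine ⟨fun i hi => ?_, fun a ha => ?_⟩
  · rw [hc]
    exact map_add (Ideal.Quotient.mk (Ideal.span {Q n})) _ _ ▸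
      map_dvd _ (centralTerm_dvd_add hrec hi)
  · rw [hc, hd]
    exact tmul_dvd_sum_sum_smul_tmul (hpair n _) (hcenter n _) (hpair m _) (hcenter m _) a
      (fun i j => (ha i j).1.symm) (fun i j => (ha i j).2.symm)

/-- In `F_2[X]/(Q_n)`, the elements `Q_{n-1-i}(x) + Q_i(x)` (for `0 ≤ i ≤ ⌊n/2⌋`) are
divisible by the central element `c_n`; consequently every doubly symmetric configuration
in `F_2[X]/(Q_n) ⊗ F_2[Y]/(Q_m)` is divisible by the central configuration `c_n ⊗ d_m`. -/
theorem stmt_15 (Q : ℕ → Polynomial (ZMod 2)) (h0 : Q 0 = 1) (h1 : Q 1 = Polynomial.X)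
    (hrec : ∀ i, Q (i + 2) = Polynomial.X * Q (i + 1) + Q i)
    (n m : ℕ) (hn : 1 ≤ n) (hm : 1 ≤ m) :
    let A := Polynomial (ZMod 2) ⧸ Ideal.span {Q n}
    let B := Polynomial (ZMod 2) ⧸ Ideal.span {Q m}
    let mkA : Polynomial (ZMod 2) → A := Ideal.Quotient.mk _
    let mkB : Polynomial (ZMod 2) → B := Ideal.Quotient.mk _
    let c : A := if Odd n then mkA (Q ((n - 1) / 2))
      else mkA (Q (n / 2)) + mkA (Q (n / 2 - 1))
    let d : B := if Odd m then mkB (Q ((m - 1) / 2))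
      else mkB (Q (m / 2)) + mkB (Q (m / 2 - 1))
    (∀ i : ℕ, i ≤ n / 2 → c ∣ mkA (Q (n - 1 - i)) + mkA (Q i)) ∧
    (∀ a : Fin n → Fin m → ZMod 2,
      (∀ i j, a i j = a i.rev j ∧ a i j = a i j.rev) →
      (c ⊗ₜ d : A ⊗[ZMod 2] B) ∣
        ∑ i : Fin n, ∑ j : Fin m, a i j • ((mkA (Q (i : ℕ))) ⊗ₜ (mkB (Q (j : ℕ))))) :=
  stmt_15_general Q hrec n m
end

section
/- Let n be odd. In F_2[X]/(Q_n(X)), the element Q_{(n-1)/2}(x) + Q_{(n-3)/2}(x) is invertible, and hence the all-on configuration sum_{i=0}^{n-1} Q_i(x) = Q_{(n-1)/2}(x) * (Q_{(n-1)/2}(x) + Q_{(n-3)/2}(x)) generates the same ideal as the central element c_n = Q_{(n-1)/2}(x); in particular the central configuration is divisible by the all-on configuration. -/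
/-!
Since `Q_{a+b} = Q_a Q_b + Q_{a-1} Q_{b-1}`, in characteristic 2 we get `Q_{2m+1} = X Q_m²`
and, by induction, `∑_{i ≤ 2m} Q_i = Q_m (Q_m + Q_{m-1})`. The factor `Q_m + Q_{m-1}` is
coprime to `X` (it is `≡ 1` modulo `X`) and to `Q_m` (consecutive terms are coprime), hence
to `Q_{2m+1}`, so it becomes a unit in `F_2[X]/(Q_{2m+1})`.
-/

open Finset

/-- `Q j` is the `(j+1)`-st Fibonacci polynomial evaluated at `x`; over `F_2[X]` with `x = X`
these are the mod-2 Chebyshev polynomials. -/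
structure IsFibonacciSeq {S : Type*} [CommRing S] (x : S) (Q : ℤ → S) : Prop where
  zero : Q 0 = 1
  one : Q 1 = x
  succ : ∀ j, Q (j + 1) = x * Q j + Q (j - 1)

namespace IsFibonacciSeq

variable {S : Type*} [CommRing S] {x : S} {Q : ℤ → S}

theorem neg_one (hQ : IsFibonacciSeq x Q) : Q (-1) = 0 := by
  simpa [hQ.zero, hQ.one] using hQ.succ 0

theorem sub_one (hQ : IsFibonacciSeq x Q) (j : ℤ) : Q (j - 1) = Q (j + 1) - x * Q j := by
  rw [hQ.succ]; ring

theorem add_nat (hQ : IsFibonacciSeq x Q) (a : ℤ) (b : ℕ) :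
    Q (a + b) = Q a * Q b + Q (a - 1) * Q (b - 1) := by
  induction b using Nat.twoStepInduction with
  | zero => simp [hQ.zero, hQ.neg_one]
  | one => simp only [Nat.cast_one, sub_self, hQ.succ a, hQ.zero, hQ.one]; ring
  | more b ih ih' =>
    push_cast at ih ih' ⊢
    have hab := hQ.succ (a + (b + 1))
    have hb := hQ.succ (b + 1)
    rw [show a + (b + 1) + 1 = a + (b + 2) by ring, show a + (b + 1) - 1 = a + b by ring] at hab
    rw [show (b : ℤ) + 1 + 1 = b + 2 by ring, add_sub_cancel_right] at hb
    rw [add_sub_cancel_right] at ih'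
    rw [hab, ih', ih, show (b : ℤ) + 2 - 1 = b + 1 by ring, hb, hQ.succ b]
    ring

theorem isCoprime_sub_one (hQ : IsFibonacciSeq x Q) (j : ℤ) : IsCoprime (Q j) (Q (j - 1)) := by
  induction j using Int.induction_on with
  | zero => simp [hQ.zero, isCoprime_one_left]
  | succ i ih =>
    have h : Q (i + 1) = Q (i - 1) + Q i * x := by rw [hQ.succ]; ring
    rw [add_sub_cancel_right, h]
    exact ih.symm.add_mul_left_left x
  | pred i ih =>
    have h : Q (-i - 1 - 1) = Q (-i) + Q (-i - 1) * -x := by rw [hQ.sub_one, sub_add_cancel]; ring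
    rw [h]
    exact (ih.add_mul_left_left _).symm

theorem isCoprime_add_sub_one_x (hQ : IsFibonacciSeq x Q) (j : ℤ) :
    IsCoprime (Q j + Q (j - 1)) x := by
  have step (j : ℤ) : Q (j + 1) + Q j = Q j + Q (j - 1) + x * Q j := by rw [hQ.succ]; ring
  induction j using Int.induction_on with
  | zero => simp [hQ.zero, hQ.neg_one, isCoprime_one_left]
  | succ i ih =>
    rw [add_sub_cancel_right, step]
    exact ih.add_mul_left_left _
  | pred i ih =>
    have h := step (-i - 1)
    rw [sub_add_cancel] at h
    rw [show Q (-i - 1) + Q (-i - 1 - 1) = Q (-i) + Q (-i - 1) + x * -Q (-i - 1) by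
      rw [h]; ring]
    exact ih.add_mul_left_left _

theorem isCoprime_add_sub_one_left (hQ : IsFibonacciSeq x Q) (j : ℤ) :
    IsCoprime (Q j + Q (j - 1)) (Q j) := by
  simpa [add_comm] using (hQ.isCoprime_sub_one j).symm.add_mul_left_left 1

theorem two_mul_add_one [CharP S 2] (hQ : IsFibonacciSeq x Q) (m : ℕ) :
    Q (2 * m + 1) = x * Q m ^ 2 := by
  have h := hQ.add_nat (m + 1) m
  rw [show (m : ℤ) + 1 + m = 2 * m + 1 by ring, add_sub_cancel_right, hQ.succ (m : ℤ)] at h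
  linear_combination h + Q m * Q (m - 1) * CharTwo.two_eq_zero (R := S)

theorem two_mul (hQ : IsFibonacciSeq x Q) (m : ℕ) :
    Q (2 * m) = Q m ^ 2 + Q (m - 1) ^ 2 := by
  rw [_root_.two_mul, hQ.add_nat]; ring

theorem sum_range_two_mul_add_one [CharP S 2] (hQ : IsFibonacciSeq x Q) (m : ℕ) :
    ∑ i ∈ range (2 * m + 1), Q i = Q m * (Q m + Q (m - 1)) := by
  induction m with
  | zero => simp [hQ.zero, hQ.neg_one]
  | succ k ih =>
    rw [show 2 * (k + 1) + 1 = 2 * k + 1 + 1 + 1 by ring, sum_range_succ, sum_range_succ, ih]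
    have hodd := hQ.two_mul_add_one k
    have heven := hQ.two_mul (k + 1)
    push_cast at heven ⊢
    rw [add_sub_cancel_right] at heven ⊢
    rw [show (2 * k + 2 : ℤ) = 2 * (k + 1) by ring, hodd, heven, hQ.succ k]
    linear_combination Q k ^ 2 * CharTwo.two_eq_zero (R := S)

theorem isCoprime_add_sub_one_two_mul_add_one [CharP S 2] (hQ : IsFibonacciSeq x Q) (m : ℕ) :
    IsCoprime (Q m + Q (m - 1)) (Q (2 * m + 1)) := by
  rw [hQ.two_mul_add_one]
  exact (hQ.isCoprime_add_sub_one_x m).mul_right (hQ.isCoprime_add_sub_one_left m).pow_right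

end IsFibonacciSeq

theorem IsCoprime.isUnit_quotient_mk_span {R : Type*} [CommRing R] {a b : R} (h : IsCoprime a b) :
    IsUnit (Ideal.Quotient.mk (Ideal.span {b}) a) := by
  obtain ⟨u, v, huv⟩ := h
  refine IsUnit.of_mul_eq_one (Ideal.Quotient.mk _ u) ?_
  rw [← map_mul, ← map_one (Ideal.Quotient.mk _), Ideal.Quotient.eq, Ideal.mem_span_singleton]
  exact ⟨-v, by linear_combination huv⟩

/-- For odd `n`, in `F_2[X]/(Q_n)` the element `Q_{(n-1)/2}(x) + Q_{(n-3)/2}(x)` is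
invertible; the all-on configuration `∑ Q_i(x)` factors as
`Q_{(n-1)/2}(x) (Q_{(n-1)/2}(x) + Q_{(n-3)/2}(x))`, generates the same ideal as the
central element `c_n = Q_{(n-1)/2}(x)`, and in particular divides it.
(The Chebyshev family is indexed by `ℤ` so that `(n-3)/2` makes sense for `n = 1`.) -/
theorem stmt_16 (Q : ℤ → Polynomial (ZMod 2)) (h0 : Q 0 = 1) (h1 : Q 1 = Polynomial.X)
    (hrec : ∀ j : ℤ, Q (j + 1) = Polynomial.X * Q j + Q (j - 1))
    (n : ℕ) (hn : Odd n) :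
    let A := Polynomial (ZMod 2) ⧸ Ideal.span {Q (n : ℤ)}
    let mk : Polynomial (ZMod 2) → A := Ideal.Quotient.mk _
    let u : A := mk (Q (((n : ℤ) - 1) / 2) + Q (((n : ℤ) - 3) / 2))
    let allon : A := ∑ i ∈ Finset.range n, mk (Q (i : ℤ))
    let c : A := mk (Q (((n : ℤ) - 1) / 2))
    IsUnit u ∧ allon = c * u ∧ Ideal.span {allon} = Ideal.span {c} ∧ allon ∣ c := by
  intro A mk u allon c
  obtain ⟨m, rfl⟩ := hn
  have hQ : IsFibonacciSeq Polynomial.X Q := ⟨h0, h1, hrec⟩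
  have hc : (2 * (m : ℤ) + 1 - 1) / 2 = m := by omega
  have hu : (2 * (m : ℤ) + 1 - 3) / 2 = m - 1 := by omega
  have hunit : IsUnit u := by
    simp only [u, mk]
    push_cast
    rw [hc, hu]
    exact (hQ.isCoprime_add_sub_one_two_mul_add_one m).isUnit_quotient_mk_span
  have hsum : allon = c * u := by
    simp only [allon, c, u, mk, ← map_sum, ← map_mul]
    push_cast
    rw [hc, hu, hQ.sum_range_two_mul_add_one]
  exact ⟨hunit, hsum, by rw [hsum, Ideal.span_singleton_mul_right_unit hunit],
    by rw [hsum, hunit.mul_right_dvd]⟩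
end

section
/- Let F be a linear subspace of F_2^n such that J_n F is contained in F and every element of F has coordinate sum 0 (i.e., F is contained in Ker c where c(y) = sum_i y_i). Then every element y of F satisfies y_i = y_{n+1-i} for all i, and additionally y_{(n+1)/2} = 0 when n is odd; i.e., F is contained in Ker S, where S maps y to the vector of sums (y_1 + y_n, y_2 + y_{n-1}, ...), with last entry y_{ceil(n/2)} itself when n is odd. -/
/-!
Extend `y` by zero to `ℤ`; then `(J y)_m = y_{m-1} + y_{m+1}` for every `0 ≤ m < n`, boundary
rows included, and `J_n` is the adjacency matrix of the path graph. Summing `J y` gives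
`2 c(y) - y_0 - y_{n-1}`, so `c(y) = c(J y) = 0` forces `y_{n-1} = -y_0`. Comparing the entries
`m` and `n-1-m` of `J y ∈ F` propagates `y_{n-1-m} = -y_m` from `m - 1` and `m` to `m + 1`, so
`y ∘ rev = -y` over any ring. In `c(y)` the coordinates `i` and `rev i` then cancel in pairs,
leaving only the middle coordinate when `n` is odd; over `F_2`, `-y = y`.
-/

open Finset SimpleGraph Matrix

variable {R : Type*} {n : ℕ}

noncomputable def intExtend [Zero R] (y : Fin n → R) : ℤ → R :=
  Function.extend (fun i : Fin n => (i : ℤ)) y 0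

section intExtend

variable (y : Fin n → R)

@[simp]
lemma intExtend_coe [Zero R] (i : Fin n) : intExtend y i = y i :=
  (Nat.cast_injective.comp Fin.val_injective).extend_apply _ _ _

lemma intExtend_of_lt_zero_or_le [Zero R] {m : ℤ} (hm : m < 0 ∨ n ≤ m) : intExtend y m = 0 :=
  Function.extend_apply' _ _ _ fun ⟨i, hi⟩ => by have := i.isLt; omega

lemma sum_ite_coe_eq_intExtend [AddCommMonoid R] (m : ℤ) :
    ∑ j : Fin n, (if (j : ℤ) = m then y j else 0) = intExtend y m := by
  by_cases hm : ∃ i : Fin n, (i : ℤ) = m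
  · obtain ⟨i, rfl⟩ := hm
    simp [Fin.val_inj]
  · rw [intExtend, Function.extend_apply' _ _ _ hm]
    exact sum_eq_zero fun j _ => if_neg fun h => hm ⟨j, h⟩

lemma sum_intExtend_add_one [AddCommGroup R] :
    ∑ i : Fin n, intExtend y (i + 1) = ∑ i, y i - intExtend y 0 := by
  cases n with
  | zero => simp [intExtend_of_lt_zero_or_le]
  | succ k =>
    have h : ∀ i : Fin k, intExtend y ((i : ℕ) + 1 : ℤ) = y i.succ := fun i => by
      simpa using intExtend_coe y i.succ
    have h0 : intExtend y 0 = y 0 := by simpa using intExtend_coe y 0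
    rw [Fin.sum_univ_castSucc, Fin.sum_univ_succ y]
    simp [h, h0, intExtend_of_lt_zero_or_le]

lemma sum_intExtend_sub_one [AddCommGroup R] :
    ∑ i : Fin n, intExtend y (i - 1) = ∑ i, y i - intExtend y (n - 1) := by
  cases n with
  | zero => simp [intExtend_of_lt_zero_or_le]
  | succ k =>
    have h : ∀ i : Fin k, intExtend y ((i : ℕ) : ℤ) = y i.castSucc := fun i => by
      simpa using intExtend_coe y i.castSucc
    have hk : intExtend y k = y (Fin.last k) := by simpa using intExtend_coe y (Fin.last k)
    rw [Fin.sum_univ_succ, Fin.sum_univ_castSucc y]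
    simp [h, hk, intExtend_of_lt_zero_or_le]

end intExtend

instance (n : ℕ) : DecidableRel (pathGraph n).Adj :=
  fun _ _ => decidable_of_iff _ pathGraph_adj.symm

lemma mulVec_pathGraph_adjMatrix [NonAssocRing R] (y : Fin n → R) (i : Fin n) :
    (adjMatrix R (pathGraph n) *ᵥ y) i = intExtend y (i - 1) + intExtend y (i + 1) := by
  rw [mulVec, dotProduct, ← sum_ite_coe_eq_intExtend y, ← sum_ite_coe_eq_intExtend y,
    ← sum_add_distrib]
  refine sum_congr rfl fun j _ => ?_
  simp only [adjMatrix_apply, pathGraph_adj]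
  split_ifs <;> first | omega | simp

lemma intExtend_mulVec_pathGraph_adjMatrix [NonAssocRing R] (y : Fin n → R) {m : ℤ}
    (h0 : 0 ≤ m) (hm : m < n) :
    intExtend (adjMatrix R (pathGraph n) *ᵥ y) m = intExtend y (m - 1) + intExtend y (m + 1) := by
  lift m to ℕ using h0
  exact (intExtend_coe _ ⟨m, by omega⟩).trans (mulVec_pathGraph_adjMatrix y _)

lemma intExtend_reflect_of_lt_zero_or_le [AddCommGroup R] (y : Fin n → R) {m : ℤ}
    (hm : m < 0 ∨ n ≤ m) : intExtend y (n - 1 - m) = -intExtend y m := by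
  rw [intExtend_of_lt_zero_or_le y hm, intExtend_of_lt_zero_or_le y (by omega), neg_zero]

section Ring

variable [Ring R] (y : Fin n → R)

lemma intExtend_sub_one_eq_neg_of_sum_eq_zero (hy : ∑ i, y i = 0)
    (hAy : ∑ i, (adjMatrix R (pathGraph n) *ᵥ y) i = 0) :
    intExtend y (n - 1) = -intExtend y 0 := by
  simp only [mulVec_pathGraph_adjMatrix, sum_add_distrib, sum_intExtend_sub_one,
    sum_intExtend_add_one, hy] at hAy
  linear_combination (norm := abel) -hAy

lemma intExtend_reflect_succ {k : ℤ} (h0 : 0 ≤ k) (hk : k < n)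
    (hAy : intExtend (adjMatrix R (pathGraph n) *ᵥ y) (n - 1 - k) =
      -intExtend (adjMatrix R (pathGraph n) *ᵥ y) k)
    (hy : intExtend y (n - 1 - (k - 1)) = -intExtend y (k - 1)) :
    intExtend y (n - 1 - (k + 1)) = -intExtend y (k + 1) := by
  rw [intExtend_mulVec_pathGraph_adjMatrix y h0 hk,
    intExtend_mulVec_pathGraph_adjMatrix y (by omega) (by omega)] at hAy
  rw [show (n : ℤ) - 1 - k + 1 = n - 1 - (k - 1) by ring, hy] at hAy
  rw [show (n : ℤ) - 1 - (k + 1) = n - 1 - k - 1 by ring]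
  linear_combination (norm := abel) hAy

theorem intExtend_reflect_eq_neg {F : Set (Fin n → R)}
    (hAF : ∀ y ∈ F, adjMatrix R (pathGraph n) *ᵥ y ∈ F) (hF : ∀ y ∈ F, ∑ i, y i = 0) :
    ∀ y ∈ F, ∀ m : ℤ, intExtend y (n - 1 - m) = -intExtend y m := by
  have key : ∀ k : ℕ, ∀ y ∈ F,
      intExtend y (n - 1 - (k - 1)) = -intExtend y (k - 1) ∧
      intExtend y (n - 1 - k) = -intExtend y k := by
    intro k
    induction k with
    | zero =>
      intro y hy
      refine ⟨intExtend_reflect_of_lt_zero_or_le y (by omega), ?_⟩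
      simpa using intExtend_sub_one_eq_neg_of_sum_eq_zero y (hF y hy) (hF _ (hAF y hy))
    | succ k ih =>
      intro y hy
      refine ⟨by simpa using (ih y hy).2, ?_⟩
      push_cast
      rcases lt_or_ge (k : ℤ) n with hk | hk
      · exact intExtend_reflect_succ y (by omega) hk (ih _ (hAF y hy)).2 (ih y hy).1
      · exact intExtend_reflect_of_lt_zero_or_le y (by omega)
  intro y hy m
  rcases lt_or_ge m 0 with hm | hm
  · exact intExtend_reflect_of_lt_zero_or_le y (.inl hm)
  · lift m to ℕ using hm
    exact (key m y hy).2

theorem apply_rev_eq_neg_of_pathGraph_invariant {F : Set (Fin n → R)}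
    (hAF : ∀ y ∈ F, adjMatrix R (pathGraph n) *ᵥ y ∈ F) (hF : ∀ y ∈ F, ∑ i, y i = 0) :
    ∀ y ∈ F, ∀ i : Fin n, y i.rev = -y i := by
  intro y hy i
  have h := intExtend_reflect_eq_neg hAF hF y hy i
  rwa [show (n : ℤ) - 1 - i = (i.rev : ℕ) by rw [Fin.val_rev]; omega, intExtend_coe,
    intExtend_coe] at h

end Ring

lemma sum_eq_apply_of_apply_rev_eq_neg [AddCommGroup R] {y : Fin n → R}
    (hy : ∀ i, y i.rev = -y i) {i : Fin n} (hi : 2 * (i : ℕ) + 1 = n) : ∑ j, y j = y i := by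
  classical
  have rev_eq_iff : ∀ j : Fin n, j.rev = j ↔ j = i := fun j => by
    simp only [Fin.ext_iff, Fin.val_rev]; omega
  rw [← add_sum_erase _ _ (mem_univ i), add_eq_left]
  refine sum_involution (fun j _ => j.rev) (fun j _ => by rw [hy, add_neg_cancel])
    (fun j hj _ => (rev_eq_iff j).not.2 (ne_of_mem_erase hj))
    (fun j hj => mem_erase.2 ⟨fun h => ?_, mem_univ _⟩) (fun j _ => Fin.rev_rev j)
  exact ne_of_mem_erase hj (by rw [← Fin.rev_rev j, h, (rev_eq_iff i).2 rfl])

/-- If a subspace `F ⊆ F_2ⁿ` is stable under `J_n` and contained in the kernel of the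
coordinate-sum map, then every element of `F` is symmetric (`y_i = y_{n+1-i}`), with zero
middle coordinate when `n` is odd; i.e. `F ⊆ Ker S`. -/
theorem stmt_17 (n : ℕ) (J : Matrix (Fin n) (Fin n) (ZMod 2))
    (hJ : ∀ i j : Fin n, J i j = if (i : ℕ) + 1 = j ∨ (j : ℕ) + 1 = i then 1 else 0)
    (F : Submodule (ZMod 2) (Fin n → ZMod 2))
    (hJF : ∀ y ∈ F, J.mulVec y ∈ F)
    (hc : ∀ y ∈ F, ∑ i, y i = 0) :
    ∀ y ∈ F, (∀ i : Fin n, y i = y i.rev) ∧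
      (∀ i : Fin n, 2 * (i : ℕ) + 1 = n → y i = 0) := by
  obtain rfl : J = adjMatrix (ZMod 2) (pathGraph n) := by
    ext i j
    simp only [hJ, adjMatrix_apply, pathGraph_adj]
  intro y hy
  have hrev := apply_rev_eq_neg_of_pathGraph_invariant hJF hc y hy
  refine ⟨fun i => by rw [hrev, ZMod.neg_eq_self_mod_two], fun i hi => ?_⟩
  rw [← sum_eq_apply_of_apply_rev_eq_neg hrev hi, hc y hy]
end

section
/- Let M be the generalized adjacency matrix over F_2 of a sigma-plus game on the n_1 x ... x n_d grid that commutes with Id tensor ... tensor J_{n_i} tensor ... tensor Id for every i (so M is an F_2-linear combination of matrices J_{n_1}^{i_1} tensor ... tensor J_{n_d}^{i_d}). Then every completely symmetric configuration lies in the image of M; i.e., every completely symmetric configuration can be reached from the all-off configuration. -/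
/-!
Since `M` is symmetric, `Im M = (Ker M)^⊥`, so it suffices to show that every completely
symmetric `y` is orthogonal to `Ker M`. Over `𝔽₂`, `x ⬝ M x = ∑ᵥ xᵥ` for a symmetric `M` with
unit diagonal, so the all-ones vector lies in `(Ker M)^⊥`; and `(Ker M)^⊥` is invariant under
each (symmetric) `J_i` commuting with `M`. Hence `(Ker M)^⊥` contains every pure tensor
`u₁ ⊗ ⋯ ⊗ u_d` whose factors `uᵢ` lie in the cyclic subspace generated by `1` under `J_{nᵢ}`.
In one dimension the recursion `J I_a = I_{a-1} + I_{a+1}` for the indicators `I_a` of the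
windows `[a, n-1-a]` puts every `I_a` in that cyclic subspace, hence every indicator of a
reflection class `{a, n-1-a} = I_a \ I_{a+1}`. Finally a completely symmetric configuration is
a linear combination of tensor products of such class indicators.
-/

open Matrix Finset Function

theorem CharTwo.sum_sum_eq_sum_diag_of_symm {R ι : Type*} [Ring R] [CharP R 2] [DecidableEq ι]
    (s : Finset ι) (f : ι → ι → R) (hf : ∀ i j, f i j = f j i) :
    ∑ i ∈ s, ∑ j ∈ s, f i j = ∑ i ∈ s, f i i := by
  rw [← sum_product', ← diag_union_offDiag, sum_union (disjoint_diag_offDiag s), sum_diag,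
    add_eq_left]
  refine sum_involution (fun p _ => p.swap) (fun p _ => ?_) (fun p hp _ h => ?_)
    (fun p hp => mem_offDiag.2 ?_) (fun p _ => p.swap_swap)
  · rw [Prod.fst_swap, Prod.snd_swap, hf, CharTwo.add_self_eq_zero]
  · exact (mem_offDiag.1 hp).2.2 (congrArg Prod.snd h)
  · obtain ⟨h1, h2, h3⟩ := mem_offDiag.1 hp
    exact ⟨h2, h1, Ne.symm h3⟩

namespace Matrix

variable {R n : Type*} [Fintype n]

section CommRing

variable [CommRing R]

def kerOrthogonal (M : Matrix n n R) : Submodule R (n → R) where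
  carrier := {w | ∀ x, M *ᵥ x = 0 → w ⬝ᵥ x = 0}
  add_mem' {v w} hv hw x hx := by rw [add_dotProduct, hv x hx, hw x hx, add_zero]
  zero_mem' x _ := zero_dotProduct x
  smul_mem' c w hw x hx := by rw [smul_dotProduct, hw x hx, smul_zero]

theorem mulVec_mem_kerOrthogonal {M B : Matrix n n R} (hB : B.IsSymm) (hMB : Commute M B)
    {w : n → R} (hw : w ∈ M.kerOrthogonal) : B *ᵥ w ∈ M.kerOrthogonal := by
  intro x hx
  have hBx : M *ᵥ (B *ᵥ x) = 0 := by
    rw [mulVec_mulVec, hMB.eq, ← mulVec_mulVec, hx, mulVec_zero]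
  rw [dotProduct_comm, dotProduct_mulVec, ← mulVec_transpose, hB.eq, dotProduct_comm]
  exact hw _ hBx

variable [DecidableEq n]

def cyclicSubmodule (A : Matrix n n R) (v : n → R) : Submodule R (n → R) :=
  Submodule.span R (Set.range fun k : ℕ => (A ^ k) *ᵥ v)

variable {A : Matrix n n R} {v : n → R}

theorem self_mem_cyclicSubmodule : v ∈ A.cyclicSubmodule v :=
  Submodule.subset_span ⟨0, by simp⟩

theorem mulVec_mem_cyclicSubmodule {u : n → R} (hu : u ∈ A.cyclicSubmodule v) :
    A *ᵥ u ∈ A.cyclicSubmodule v := by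
  have hmap : (A.cyclicSubmodule v).map A.mulVecLin ≤ A.cyclicSubmodule v := by
    rw [cyclicSubmodule, Submodule.map_span, Submodule.span_le]
    rintro _ ⟨_, ⟨k, rfl⟩, rfl⟩
    exact Submodule.subset_span ⟨k + 1, by simp [mulVec_mulVec, pow_succ']⟩
  exact hmap ⟨u, hu, rfl⟩

theorem cyclicSubmodule_le {P : Submodule R (n → R)} (hv : v ∈ P) (hP : ∀ u ∈ P, A *ᵥ u ∈ P) :
    A.cyclicSubmodule v ≤ P := by
  refine Submodule.span_le.2 ?_
  rintro _ ⟨k, rfl⟩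
  dsimp only
  induction k with
  | zero => rwa [pow_zero, one_mulVec]
  | succ k ih => rw [pow_succ', ← mulVec_mulVec]; exact hP _ ih

end CommRing

theorem one_mem_kerOrthogonal {M : Matrix n n (ZMod 2)} (hM : M.IsSymm)
    (hdiag : ∀ i, M i i = 1) : (1 : n → ZMod 2) ∈ M.kerOrthogonal := by
  classical
  intro x hx
  have hquad : x ⬝ᵥ M *ᵥ x = ∑ i, x i := by
    simp only [dotProduct, mulVec, mul_sum]
    rw [CharTwo.sum_sum_eq_sum_diag_of_symm _ _ fun i j => by rw [← hM.apply i j]; ring]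
    exact sum_congr rfl fun i _ => by rw [hdiag, one_mul, ← sq, ZMod.pow_card]
  rw [one_dotProduct, ← hquad, hx, dotProduct_zero]

theorem exists_mulVec_eq_of_mem_kerOrthogonal_transpose [DecidableEq n] {K : Type*} [Field K]
    {M : Matrix n n K} {y : n → K} (hy : y ∈ Mᵀ.kerOrthogonal) : ∃ z, M *ᵥ z = y := by
  have hmem : dotProductEquiv K n y ∈ (LinearMap.ker Mᵀ.mulVecLin).dualAnnihilator :=
    (Submodule.mem_dualAnnihilator _).2 fun x hx => hy x hx
  rw [← LinearMap.range_dualMap_eq_dualAnnihilator_ker] at hmem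
  obtain ⟨φ, hφ⟩ := hmem
  obtain ⟨z, rfl⟩ := (dotProductEquiv K n).surjective φ
  refine ⟨z, dotProduct_eq _ _ fun x => ?_⟩
  have hx := LinearMap.congr_fun hφ x
  simp only [LinearMap.dualMap_apply, mulVecLin_apply, mulVec_transpose,
    dotProductEquiv_apply_apply] at hx
  rw [dotProduct_comm, dotProduct_mulVec, dotProduct_comm, hx]

end Matrix

section PureTensor

variable {R : Type*} [CommRing R] {ι : Type*} [Fintype ι] {κ : ι → Type*}

variable (R κ) in
def pureTensor : MultilinearMap R (fun i => κ i → R) ((Π i, κ i) → R) :=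
  MultilinearMap.piFamily fun _ => MultilinearMap.mkPiRing R ι 1

theorem pureTensor_apply (u : Π i, κ i → R) (v : Π i, κ i) :
    pureTensor R κ u v = ∏ i, u i (v i) := by
  simp [pureTensor]

variable [DecidableEq ι] [∀ i, DecidableEq (κ i)]

def Matrix.alongAxis (i : ι) (A : Matrix (κ i) (κ i) R) : Matrix (Π l, κ l) (Π l, κ l) R :=
  of fun v w => if ∀ l, l ≠ i → v l = w l then A (v i) (w i) else 0

theorem Matrix.isSymm_alongAxis {i : ι} {A : Matrix (κ i) (κ i) R} (hA : A.IsSymm) :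
    (alongAxis i A).IsSymm := by
  ext v w
  simp only [transpose_apply, alongAxis, of_apply, eq_comm (a := v _), hA.apply]

variable [∀ i, Fintype (κ i)]

theorem alongAxis_mulVec_pureTensor (i : ι) (A : Matrix (κ i) (κ i) R) (u : Π i, κ i → R) :
    alongAxis i A *ᵥ pureTensor R κ u = pureTensor R κ (update u i (A *ᵥ u i)) := by
  funext v
  have hprod : ∀ c : κ i → R, ∀ k, ∏ l, update u i c l (update v i k l) =
      c k * ∏ l ∈ univ \ {i}, u l (v l) := by
    intro c k
    rw [← prod_update_of_mem (mem_univ i)]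
    exact prod_congr rfl fun l _ => apply_update₂ (fun l (φ : κ l → R) x => φ x) u v i c k l
  have hoff : ∀ w ∉ univ.image (update v i), alongAxis i A v w = 0 := by
    intro w hw
    refine if_neg fun h => hw (mem_image.2 ⟨w i, mem_univ _, ?_⟩)
    exact (eq_update_iff.2 ⟨rfl, fun l hl => (h l hl).symm⟩).symm
  calc (alongAxis i A *ᵥ pureTensor R κ u) v
      = ∑ w ∈ univ.image (update v i), alongAxis i A v w * pureTensor R κ u w :=
        (sum_subset (subset_univ _) fun w _ hw => mul_eq_zero_of_left (hoff w hw) _).symm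
    _ = ∑ k, A (v i) k * (u i k * ∏ l ∈ univ \ {i}, u l (v l)) := by
        rw [sum_image fun _ _ _ _ h => update_injective v i h]
        refine sum_congr rfl fun k _ => ?_
        rw [pureTensor_apply, ← hprod, update_eq_self, alongAxis, of_apply,
          if_pos fun l hl => (update_of_ne hl k v).symm, update_self]
    _ = pureTensor R κ (update u i (A *ᵥ u i)) v := by
        rw [pureTensor_apply, ← update_eq_self i v, hprod, update_eq_self, mulVec, dotProduct,
          sum_mul]
        simp only [mul_assoc]

theorem pureTensor_mem_of_forall_mem_cyclicSubmodule {W : Submodule R ((Π i, κ i) → R)}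
    {A : Π i, Matrix (κ i) (κ i) R} (h1 : 1 ∈ W) (hW : ∀ i, ∀ w ∈ W, alongAxis i (A i) *ᵥ w ∈ W)
    {u : Π i, κ i → R} (hu : ∀ i, u i ∈ (A i).cyclicSubmodule 1) : pureTensor R κ u ∈ W := by
  suffices key : ∀ s : Finset ι, ∀ u : Π i, κ i → R, (∀ i ∈ s, u i ∈ (A i).cyclicSubmodule 1) →
      (∀ i ∉ s, u i = 1) → pureTensor R κ u ∈ W from
    key univ u (fun i _ => hu i) fun i hi => absurd (mem_univ i) hi
  intro s
  induction s using Finset.induction_on with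
  | empty =>
    intro u _ hu1
    obtain rfl : u = fun _ => 1 := funext fun i => hu1 i (notMem_empty i)
    convert h1
    funext v
    simp [pureTensor_apply]
  | insert i s hi ih =>
    intro u hu hu1
    have hP : (A i).cyclicSubmodule 1 ≤ W.comap ((pureTensor R κ).toLinearMap u i) := by
      refine cyclicSubmodule_le ?_ fun c hc => ?_
      · refine ih _ (fun l hl => ?_) fun l hl => ?_
        · rw [update_of_ne (ne_of_mem_of_not_mem hl hi)]
          exact hu l (mem_insert_of_mem hl)
        · rcases eq_or_ne l i with rfl | hli
          · exact update_self ..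
          · rw [update_of_ne hli]
            exact hu1 l (by simp [hli, hl])
      · have hJc := alongAxis_mulVec_pureTensor i (A i) (update u i c)
        rw [update_idem, update_self] at hJc
        simpa [← hJc] using hW i _ hc
    simpa using hP (hu i (mem_insert_self i s))

end PureTensor

def pathMatrix (m : ℕ) : Matrix (Fin m) (Fin m) (ZMod 2) :=
  of fun j k => if (j : ℕ) + 1 = k ∨ (k : ℕ) + 1 = j then 1 else 0

theorem isSymm_pathMatrix (m : ℕ) : (pathMatrix m).IsSymm := by
  ext j k
  simp only [transpose_apply, pathMatrix, of_apply, or_comm]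

theorem pathMatrix_mulVec_apply {m : ℕ} (F : ℕ → ZMod 2) (j : Fin m) :
    (pathMatrix m *ᵥ fun k => F k) j =
      (if (j : ℕ) + 1 < m then F (j + 1) else 0) + (if 0 < (j : ℕ) then F (j - 1) else 0) := by
  have hsplit : ∀ k : ℕ, (if (j : ℕ) + 1 = k ∨ k + 1 = j then (1 : ZMod 2) else 0) * F k =
      (if (j : ℕ) + 1 = k then F k else 0) + (if j - 1 = k ∧ 0 < (j : ℕ) then F k else 0) := by
    intro k
    split_ifs <;> first | omega | simp
  simp only [mulVec, dotProduct, pathMatrix, of_apply]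
  rw [Fin.sum_univ_eq_sum_range
    (fun k => (if (j : ℕ) + 1 = k ∨ k + 1 = j then (1 : ZMod 2) else 0) * F k)]
  simp only [hsplit, sum_add_distrib, sum_ite_eq, ite_and, mem_range]
  rw [if_pos (by omega : (j : ℕ) - 1 < m)]

def intervalVec (m a : ℕ) : Fin m → ZMod 2 :=
  fun j => if a ≤ (j : ℕ) ∧ (j : ℕ) + a < m then 1 else 0

theorem pathMatrix_mulVec_intervalVec {m a : ℕ} (h : 2 * a + 1 < m) :
    pathMatrix m *ᵥ intervalVec m a = intervalVec m (a - 1) + intervalVec m (a + 1) := by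
  funext j
  refine (pathMatrix_mulVec_apply (fun k => if a ≤ k ∧ k + a < m then 1 else 0) j).trans ?_
  simp only [Pi.add_apply, intervalVec]
  split_ifs <;> first | omega | decide

theorem intervalVec_eq_zero {m a : ℕ} (h : m ≤ 2 * a) : intervalVec m a = 0 :=
  funext fun j => if_neg (by omega)

theorem intervalVec_mem_cyclicSubmodule (m a : ℕ) :
    intervalVec m a ∈ (pathMatrix m).cyclicSubmodule 1 := by
  induction a using Nat.strong_induction_on with
  | _ a ih =>
  rcases a with _ | a
  · convert self_mem_cyclicSubmodule using 1
    funext j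
    exact if_pos ⟨Nat.zero_le _, j.isLt⟩
  · by_cases h : 2 * a + 1 < m
    · rw [eq_sub_of_add_eq' (pathMatrix_mulVec_intervalVec h).symm]
      exact sub_mem (mulVec_mem_cyclicSubmodule (ih a (by omega))) (ih (a - 1) (by omega))
    · rw [intervalVec_eq_zero (by omega)]
      exact zero_mem _

theorem indicator_min_rev_mem_cyclicSubmodule {m : ℕ} (a : Fin m) :
    (fun k : Fin m => if min k k.rev = a then (1 : ZMod 2) else 0) ∈
      (pathMatrix m).cyclicSubmodule 1 := by
  convert add_mem (intervalVec_mem_cyclicSubmodule m a)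
    (intervalVec_mem_cyclicSubmodule m (a + 1)) using 1
  funext k
  simp only [Pi.add_apply, intervalVec, Fin.ext_iff, Fin.coe_min, Fin.val_rev]
  split_ifs <;> first | omega | rfl

section CompletelySymmetric

variable {ι : Type*} [Fintype ι] [DecidableEq ι] {m : ι → ℕ}

def revRep (v : Π l, Fin (m l)) : Π l, Fin (m l) := fun l => min (v l) (v l).rev

theorem apply_revRep {α : Type*} {y : (Π l, Fin (m l)) → α}
    (hy : ∀ i v, y (update v i (v i).rev) = y v) (v : Π l, Fin (m l)) : y (revRep v) = y v := by
  suffices key : ∀ s : Finset ι, y (fun l => if l ∈ s then revRep v l else v l) = y v by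
    simpa using key univ
  intro s
  induction s using Finset.induction_on with
  | empty => simp
  | insert i s hi ih =>
    set w : Π l, Fin (m l) := fun l => if l ∈ s then revRep v l else v l
    have hw : (fun l => if l ∈ insert i s then revRep v l else v l) =
        update w i (revRep w i) := by
      funext l
      rcases eq_or_ne l i with rfl | hli
      · simp [w, revRep, hi]
      · simp [w, hli]
    rw [hw, ← ih]
    rcases min_choice (w i) (w i).rev with h | h
    · rw [revRep, h, update_eq_self]
    · rw [revRep, h, hy]

theorem mem_of_forall_apply_update_rev {R : Type*} [CommRing R]
    {W : Submodule R ((Π l, Fin (m l)) → R)}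
    (hW : ∀ r, (fun v => if revRep v = r then (1 : R) else 0) ∈ W)
    {y : (Π l, Fin (m l)) → R} (hy : ∀ i v, y (update v i (v i).rev) = y v) : y ∈ W := by
  have hdecomp : y = ∑ r, y r • fun v => if revRep v = r then (1 : R) else 0 := by
    funext v
    simp [Finset.sum_apply, apply_revRep hy]
  rw [hdecomp]
  exact sum_mem fun r _ => Submodule.smul_mem _ _ (hW r)

end CompletelySymmetric

/-- For a sigma-plus game on a `d`-dimensional grid whose (symmetric, all-ones-diagonal)
generalized adjacency matrix `M` commutes with each elementary game `J_{n_i}`, every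
completely symmetric configuration lies in the image of `M`. -/
theorem stmt_19 (d : ℕ) (n : Fin d → ℕ)
    (J : Fin d → Matrix ((l : Fin d) → Fin (n l)) ((l : Fin d) → Fin (n l)) (ZMod 2))
    (hJ : ∀ (i : Fin d) (v w : (l : Fin d) → Fin (n l)), J i v w =
      if (∀ l, l ≠ i → v l = w l) ∧ ((v i : ℕ) + 1 = w i ∨ (w i : ℕ) + 1 = v i)
      then 1 else 0)
    (M : Matrix ((l : Fin d) → Fin (n l)) ((l : Fin d) → Fin (n l)) (ZMod 2))
    (hsymm : M.IsSymm) (hdiag : ∀ v, M v v = 1)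
    (hcomm : ∀ i, M * J i = J i * M) :
    ∀ y : ((l : Fin d) → Fin (n l)) → ZMod 2,
      (∀ (i : Fin d) (v : (l : Fin d) → Fin (n l)),
        y (Function.update v i (v i).rev) = y v) →
      ∃ z, M.mulVec z = y := by
  obtain rfl : J = fun i => alongAxis i (pathMatrix (n i)) :=
    funext fun i => Matrix.ext fun v w => by simp [hJ, ite_and, alongAxis, pathMatrix]
  intro y hy
  refine exists_mulVec_eq_of_mem_kerOrthogonal_transpose ?_
  rw [hsymm.eq]
  refine mem_of_forall_apply_update_rev (fun r => ?_) hy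
  have hJ_inv : ∀ i, ∀ w ∈ M.kerOrthogonal,
      alongAxis i (pathMatrix (n i)) *ᵥ w ∈ M.kerOrthogonal := fun i _ =>
    mulVec_mem_kerOrthogonal (isSymm_alongAxis (κ := fun l => Fin (n l)) (isSymm_pathMatrix _))
      (hcomm i)
  have hfiber := pureTensor_mem_of_forall_mem_cyclicSubmodule
    (one_mem_kerOrthogonal hsymm hdiag) hJ_inv
    (fun i => indicator_min_rev_mem_cyclicSubmodule (r i))
  convert hfiber using 1
  funext v
  simp [pureTensor_apply, Fintype.prod_boole, funext_iff, revRep]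
end
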